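/- arXiv:2202.07608 — 2 statements merged into one kernel-verified Lean document; each statement's English description precedes it below -/
import Mathlib

section
/- Let G be a finite simple graph that admits, under some linear ordering of its vertices, a 2-almost mixed-free adjacency matrix. Then χ(G) ≤ ω(G). -/
namespace TwPaper


/-- A `{0,1}`-matrix with `m` rows and `n` columns, entries modeled as `Bool`. -/
abbrev BMatrix (m n : ℕ) := Matrix (Fin m) (Fin n) Bool

/-- The submatrix of `M` given by rows `R` and columns `C` is horizontal:
all its rows are constant. -/
def Horizontal {m n : ℕ} (M : BMatrix m n) (R : Set (Fin m)) (C : Set (Fin n)) : Prop :=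
  ∀ i ∈ R, ∀ j ∈ C, ∀ j' ∈ C, M i j = M i j'

/-- The submatrix of `M` given by rows `R` and columns `C` is vertical:
all its columns are constant. -/
def Vertical {m n : ℕ} (M : BMatrix m n) (R : Set (Fin m)) (C : Set (Fin n)) : Prop :=
  ∀ j ∈ C, ∀ i ∈ R, ∀ i' ∈ R, M i j = M i' j

/-- The submatrix of `M` given by rows `R` and columns `C` is mixed:
neither horizontal nor vertical. -/
def Mixed {m n : ℕ} (M : BMatrix m n) (R : Set (Fin m)) (C : Set (Fin n)) : Prop :=
  ¬ Horizontal M R C ∧ ¬ Vertical M R C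

/-- The submatrix of `M` given by rows `R` and columns `C` is constant `0`. -/
def ConstantZero {m n : ℕ} (M : BMatrix m n) (R : Set (Fin m)) (C : Set (Fin n)) : Prop :=
  ∀ i ∈ R, ∀ j ∈ C, M i j = false

/-- A `d`-division of an `m × n` matrix: a partition of the rows into `d` contiguous
nonempty blocks, and likewise for columns.  It is encoded by the monotone surjective
maps sending a row (resp. column) to the index of its block. -/
structure Division (m n d : ℕ) where
  row : Fin m → Fin d
  col : Fin n → Fin d
  row_mono : Monotone row
  col_mono : Monotone col
  row_surj : Function.Surjective row
  col_surj : Function.Surjective col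

/-- The `i`-th row block of a division. -/
def Division.rowBlock {m n d : ℕ} (D : Division m n d) (i : Fin d) : Set (Fin m) :=
  {a | D.row a = i}

/-- The `j`-th column block of a division. -/
def Division.colBlock {m n d : ℕ} (D : Division m n d) (j : Fin d) : Set (Fin n) :=
  {b | D.col b = j}

/-- The zone `D[i,j]` of the division `D` of `M` is mixed. -/
def Division.ZoneMixed {m n d : ℕ} (D : Division m n d) (M : BMatrix m n) (i j : Fin d) : Prop :=
  Mixed M (D.rowBlock i) (D.colBlock j)

/-- A `d`-division is a `d`-almost mixed minor if every off-diagonal zone is mixed. -/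
def IsAlmostMixedMinor {m n d : ℕ} (M : BMatrix m n) (D : Division m n d) : Prop :=
  ∀ i j : Fin d, i ≠ j → D.ZoneMixed M i j

/-- A `d`-division is a `d`-mixed minor if every zone is mixed. -/
def IsMixedMinor {m n d : ℕ} (M : BMatrix m n) (D : Division m n d) : Prop :=
  ∀ i j : Fin d, D.ZoneMixed M i j

/-- `M` is `d`-almost mixed-free: it has no `d`-almost mixed minor. -/
def AlmostMixedFree {m n : ℕ} (d : ℕ) (M : BMatrix m n) : Prop :=
  ¬ ∃ D : Division m n d, IsAlmostMixedMinor M D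

/-- `M` is `d`-mixed-free: it has no `d`-mixed minor. -/
def MixedFree {m n : ℕ} (d : ℕ) (M : BMatrix m n) : Prop :=
  ¬ ∃ D : Division m n d, IsMixedMinor M D

/-- A graphic matrix: symmetric with zero diagonal. -/
def Graphic {n : ℕ} (M : BMatrix n n) : Prop :=
  (∀ i j, M i j = M j i) ∧ (∀ i, M i i = false)

/-- A division of a square matrix is symmetric if rows and columns are
partitioned in exactly the same way. -/
def Division.Symm {n d : ℕ} (D : Division n n d) : Prop := D.row = D.col

/-- `L` is a coarsening of `D`: every row (resp. column) block of `L` is a union of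
consecutive row (resp. column) blocks of `D`. -/
def Coarsens {m n d e : ℕ} (L : Division m n e) (D : Division m n d) : Prop :=
  (∀ a a' : Fin m, D.row a = D.row a' → L.row a = L.row a') ∧
  (∀ b b' : Fin n, D.col b = D.col b' → L.col b = L.col b')

/-- The zone is horizontal and not constant `0`. -/
def HorizNonzero {m n : ℕ} (M : BMatrix m n) (R : Set (Fin m)) (C : Set (Fin n)) : Prop :=
  Horizontal M R C ∧ ¬ ConstantZero M R C

/-- The zone is vertical and not constant `0`. -/
def VertNonzero {m n : ℕ} (M : BMatrix m n) (R : Set (Fin m)) (C : Set (Fin n)) : Prop :=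
  Vertical M R C ∧ ¬ ConstantZero M R C

/-- The horizontal compression `G^H_D` of a graphic matrix `M` along a symmetric
division `D` with `s` blocks: vertices are the blocks, and `i j` (for `i < j`) are
adjacent iff the zone `D[i,j]` is horizontal and not constant `0`. -/
def horizCompression {n s : ℕ} (M : BMatrix n n) (D : Division n n s) : SimpleGraph (Fin s) :=
  SimpleGraph.fromRel (fun i j => i < j ∧ HorizNonzero M (D.rowBlock i) (D.colBlock j))

/-- The vertical compression `G^V_D`. -/
def vertCompression {n s : ℕ} (M : BMatrix n n) (D : Division n n s) : SimpleGraph (Fin s) :=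
  SimpleGraph.fromRel (fun i j => i < j ∧ VertNonzero M (D.rowBlock i) (D.colBlock j))

/-- The mixed compression `G^M_D`: `i ≠ j` are adjacent iff the zone `D[i,j]` is mixed. -/
def mixedCompression {n s : ℕ} (M : BMatrix n n) (D : Division n n s) : SimpleGraph (Fin s) :=
  SimpleGraph.fromRel (fun i j => D.ZoneMixed M i j)

open Classical in
/-- The adjacency matrix of a graph on `Fin s`, rows and columns in the natural order. -/
noncomputable def graphMatrix {s : ℕ} (G : SimpleGraph (Fin s)) : BMatrix s s :=
  fun i j => if G.Adj i j then true else false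

open Classical in
/-- The adjacency matrix of `G` under the vertex ordering given by the
enumeration `e` of its vertices. -/
noncomputable def adjMatrix {V : Type*} [Fintype V] (G : SimpleGraph V)
    (e : Fin (Fintype.card V) ≃ V) : BMatrix (Fintype.card V) (Fintype.card V) :=
  fun i j => if G.Adj (e i) (e j) then true else false

/-- `G` admits, under some linear ordering of its vertices, a `d`-almost mixed-free
adjacency matrix. -/
def AdmitsAMFree {V : Type*} [Fintype V] (d : ℕ) (G : SimpleGraph V) : Prop :=
  ∃ e : Fin (Fintype.card V) ≃ V, AlmostMixedFree d (adjMatrix G e)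

end TwPaper

/-!
Along the vertex order, every block `M[<k, ≥k]` of a `2`-almost mixed-free symmetric matrix is
horizontal or vertical: otherwise it and its transpose would be the two mixed off-diagonal zones
of the `2`-division cutting at `k`. This property of cuts passes to every vertex subset. In a
subset, the first vertex `k` whose cut after it is horizontal has a vertical cut just before it;
comparing the adjacency of `k` to its left, of `k` to its right, and of left to right (three
truth values, two of which agree) splits the subset into two nonempty parts with all or no edges
between them. Graphs in which every set of at least two vertices splits this way satisfy
`χ = ω`, by induction: a disjoint union takes the maximum of both parameters, a join the sum.
-/

open Finset

namespace SimpleGraph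

variable {V : Type*} (G : SimpleGraph V)

def ColorableOn (s : Finset V) (m : ℕ) : Prop :=
  ∃ c : V → ℕ, (∀ x ∈ s, c x < m) ∧ ∀ x ∈ s, ∀ y ∈ s, G.Adj x y → c x ≠ c y

def HasHomogeneousSplit [DecidableEq V] (s : Finset V) : Prop :=
  ∃ A B : Finset V, A.Nonempty ∧ B.Nonempty ∧ Disjoint A B ∧ A ∪ B = s ∧
    ((∀ a ∈ A, ∀ b ∈ B, G.Adj a b) ∨ ∀ a ∈ A, ∀ b ∈ B, ¬G.Adj a b)

def IsUniformTo (A B : Finset V) : Prop :=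
  ∀ a ∈ A, ∀ b ∈ B, ∀ b' ∈ B, G.Adj a b ↔ G.Adj a b'

/-- The graph analogue of "every block `M[<k, ≥k]` is horizontal or vertical", stated for all
pairs of vertex sets lying on either side of a cut, so that it passes to vertex subsets. -/
def HasUniformCuts [LinearOrder V] : Prop :=
  ∀ A B : Finset V, (∀ a ∈ A, ∀ b ∈ B, a < b) → G.IsUniformTo A B ∨ G.IsUniformTo B A

variable {G}

section Coloring

lemma ColorableOn.mono {s : Finset V} {m m' : ℕ} (h : G.ColorableOn s m) (hm : m ≤ m') :
    G.ColorableOn s m' :=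
  let ⟨c, hlt, hc⟩ := h
  ⟨c, fun x hx => (hlt x hx).trans_le hm, hc⟩

lemma ColorableOn.colorable [Fintype V] {m : ℕ} (h : G.ColorableOn univ m) : G.Colorable m :=
  let ⟨c, hlt, hc⟩ := h
  ⟨Coloring.mk (fun x => ⟨c x, hlt x (mem_univ x)⟩) fun hxy hcxy =>
    hc _ (mem_univ _) _ (mem_univ _) hxy (Fin.val_eq_of_eq hcxy)⟩

variable [DecidableEq V]

lemma ColorableOn.union {A B : Finset V} {m₁ m₂ : ℕ} (hA : G.ColorableOn A m₁)
    (hB : G.ColorableOn B m₂) : G.ColorableOn (A ∪ B) (m₁ + m₂) := by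
  obtain ⟨c₁, hlt₁, hc₁⟩ := hA
  obtain ⟨c₂, hlt₂, hc₂⟩ := hB
  refine ⟨fun x => if x ∈ A then c₁ x else m₁ + c₂ x, fun x hx => ?_, fun x hx y hy hxy => ?_⟩
  · dsimp only
    split_ifs with hxA
    · have := hlt₁ x hxA; omega
    · have := hlt₂ x ((mem_union.1 hx).resolve_left hxA); omega
  · rw [mem_union] at hx hy
    by_cases hxA : x ∈ A <;> by_cases hyA : y ∈ A <;> simp only [hxA, hyA, if_true, if_false]
    · exact hc₁ x hxA y hyA hxy
    · have := hlt₁ x hxA; omega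
    · have := hlt₁ y hyA; omega
    · have := hc₂ x (hx.resolve_left hxA) y (hy.resolve_left hyA) hxy; omega

lemma ColorableOn.union_of_forall_not_adj {A B : Finset V} {m : ℕ} (hA : G.ColorableOn A m)
    (hB : G.ColorableOn B m) (hAB : ∀ a ∈ A, ∀ b ∈ B, ¬G.Adj a b) :
    G.ColorableOn (A ∪ B) m := by
  obtain ⟨c₁, hlt₁, hc₁⟩ := hA
  obtain ⟨c₂, hlt₂, hc₂⟩ := hB
  refine ⟨fun x => if x ∈ A then c₁ x else c₂ x, fun x hx => ?_, fun x hx y hy hxy => ?_⟩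
  · dsimp only
    split_ifs with hxA
    exacts [hlt₁ x hxA, hlt₂ x ((mem_union.1 hx).resolve_left hxA)]
  · rw [mem_union] at hx hy
    by_cases hxA : x ∈ A <;> by_cases hyA : y ∈ A <;> simp only [hxA, hyA, if_true, if_false]
    · exact hc₁ x hxA y hyA hxy
    · exact absurd hxy (hAB x hxA y (hy.resolve_left hyA))
    · exact absurd hxy.symm (hAB y hyA x (hx.resolve_left hxA))
    · exact hc₂ x (hx.resolve_left hxA) y (hy.resolve_left hyA) hxy

lemma IsNClique.union_of_forall_adj {t₁ t₂ : Finset V} {m₁ m₂ : ℕ}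
    (h₁ : G.IsNClique m₁ t₁) (h₂ : G.IsNClique m₂ t₂) (h : ∀ a ∈ t₁, ∀ b ∈ t₂, G.Adj a b) :
    G.IsNClique (m₁ + m₂) (t₁ ∪ t₂) := by
  have hdisj : Disjoint t₁ t₂ :=
    Finset.disjoint_left.2 fun {a} ha hb => G.loopless.irrefl a (h a ha a hb)
  refine ⟨?_, by rw [card_union_of_disjoint hdisj, h₁.card_eq, h₂.card_eq]⟩
  intro x hx y hy hxy
  simp only [coe_union, Set.mem_union, mem_coe] at hx hy
  rcases hx with hx | hx <;> rcases hy with hy | hy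
  exacts [h₁.isClique hx hy hxy, h x hx y hy, (h y hy x hx).symm, h₂.isClique hx hy hxy]

theorem exists_colorableOn_isNClique
    (h : ∀ s : Finset V, 2 ≤ #s → G.HasHomogeneousSplit s) (s : Finset V) :
    ∃ m, G.ColorableOn s m ∧ ∃ t ⊆ s, G.IsNClique m t := by
  induction s using Finset.strongInduction with
  | H s ih =>
  by_cases hs : #s < 2
  · have hsub : ∀ x ∈ s, ∀ y ∈ s, x = y := card_le_one.1 (by omega)
    refine ⟨#s, ⟨fun _ => 0, fun x hx => card_pos.2 ⟨x, hx⟩, fun x hx y hy hxy => ?_⟩,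
      s, subset_rfl, ⟨fun x hx y hy hxy => absurd (hsub x hx y hy) hxy, rfl⟩⟩
    exact absurd (hsub x hx y hy) (G.ne_of_adj hxy)
  obtain ⟨A, B, ⟨a, ha⟩, ⟨b, hb⟩, hdisj, rfl, hAB⟩ := h s (by omega)
  obtain ⟨m₁, hcol₁, t₁, ht₁, hcl₁⟩ := ih A <| (ssubset_iff_of_subset subset_union_left).2
    ⟨b, mem_union_right _ hb, Finset.disjoint_right.1 hdisj hb⟩
  obtain ⟨m₂, hcol₂, t₂, ht₂, hcl₂⟩ := ih B <| (ssubset_iff_of_subset subset_union_right).2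
    ⟨a, mem_union_left _ ha, Finset.disjoint_left.1 hdisj ha⟩
  rcases hAB with hjoin | hsep
  · exact ⟨m₁ + m₂, hcol₁.union hcol₂, t₁ ∪ t₂, union_subset_union ht₁ ht₂,
      hcl₁.union_of_forall_adj hcl₂ fun a ha b hb => hjoin a (ht₁ ha) b (ht₂ hb)⟩
  · rcases le_total m₁ m₂ with hm | hm
    · exact ⟨m₂, (hcol₁.mono hm).union_of_forall_not_adj hcol₂ hsep, t₂,
        ht₂.trans subset_union_right, hcl₂⟩
    · exact ⟨m₁, hcol₁.union_of_forall_not_adj (hcol₂.mono hm) hsep, t₁,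
        ht₁.trans subset_union_left, hcl₁⟩

theorem chromaticNumber_le_cliqueNum_of_forall_hasHomogeneousSplit [Fintype V]
    (h : ∀ s : Finset V, 2 ≤ #s → G.HasHomogeneousSplit s) :
    G.chromaticNumber ≤ G.cliqueNum := by
  obtain ⟨m, hcol, t, -, hcl⟩ := exists_colorableOn_isNClique h univ
  calc G.chromaticNumber ≤ m := hcol.colorable.chromaticNumber_le
    _ ≤ G.cliqueNum := by
      rw [← hcl.card_eq]
      exact_mod_cast IsClique.card_le_cliqueNum (tc := hcl.isClique)

end Coloring

lemma cliqueNum_le_of_embedding [Finite V] {W : Type*} [Finite W] {G' : SimpleGraph W}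
    (f : G ↪g G') : G.cliqueNum ≤ G'.cliqueNum := by
  obtain ⟨t, ht⟩ := G.exists_isNClique_cliqueNum
  have hle : G.map f.toEmbedding ≤ G' :=
    (map_le_iff_le_comap _ _ _).2 fun _ _ => f.map_rel_iff.2
  have hclique := (ht.map (f := f.toEmbedding)).mono hle
  rw [← hclique.card_eq]
  exact IsClique.card_le_cliqueNum (tc := hclique.isClique)

section Splits

variable [DecidableEq V]

lemma hasHomogeneousSplit_of_filter {s : Finset V} (P : V → Prop) [DecidablePred P] (c : Prop)
    (hP : ∃ a ∈ s, P a) (hnP : ∃ b ∈ s, ¬P b)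
    (h : ∀ a ∈ s, ∀ b ∈ s, P a → ¬P b → (G.Adj a b ↔ c)) : G.HasHomogeneousSplit s := by
  obtain ⟨a, ha, hPa⟩ := hP
  obtain ⟨b, hb, hPb⟩ := hnP
  refine ⟨s.filter P, s.filter (¬P ·), ⟨a, mem_filter.2 ⟨ha, hPa⟩⟩, ⟨b, mem_filter.2 ⟨hb, hPb⟩⟩,
    disjoint_filter_filter_not _ _ _, filter_union_filter_not_eq P s, ?_⟩
  simp only [mem_filter]
  by_cases hc : c
  · exact .inl fun a ha b hb => (h a ha.1 b hb.1 ha.2 hb.2).2 hc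
  · exact .inr fun a ha b hb hab => hc ((h a ha.1 b hb.1 ha.2 hb.2).1 hab)

lemma hasHomogeneousSplit_of_uniform_vertex {s : Finset V} (hs : 2 ≤ #s) {x : V} (hx : x ∈ s)
    (c : Prop) (h : ∀ y ∈ s, y ≠ x → (G.Adj x y ↔ c)) : G.HasHomogeneousSplit s := by
  obtain ⟨y, hy, hyx⟩ := exists_mem_ne hs x
  refine hasHomogeneousSplit_of_filter (· = x) c ⟨x, hx, rfl⟩ ⟨y, hy, hyx⟩ ?_
  rintro a - b hb rfl hbx
  exact h b hb hbx

end Splits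

section Cuts

variable [LinearOrder V]

lemma exists_pivot (hG : G.HasUniformCuts) {s : Finset V} (hs : s.Nonempty) :
    ∃ k ∈ s, G.IsUniformTo (s.filter (· ≤ k)) (s.filter (k < ·)) ∧
      G.IsUniformTo (s.filter (k ≤ ·)) (s.filter (· < k)) := by
  classical
  -- `k` is the first vertex whose cut after it is horizontal; the cut just before it, which is
  -- the cut after its predecessor `j`, is then vertical.
  set T := s.filter fun k => G.IsUniformTo (s.filter (· ≤ k)) (s.filter (k < ·))
  have hT : T.Nonempty := ⟨s.max' hs, mem_filter.2 ⟨max'_mem s hs, fun a _ b hb =>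
    absurd (s.le_max' b (mem_filter.1 hb).1) (not_le.2 (mem_filter.1 hb).2)⟩⟩
  obtain ⟨hks, hkH⟩ := mem_filter.1 (T.min'_mem hT)
  refine ⟨T.min' hT, hks, hkH, ?_⟩
  set k := T.min' hT
  by_cases hL : (s.filter (· < k)).Nonempty
  · set j := (s.filter (· < k)).max' hL
    obtain ⟨hjs, hjk⟩ := mem_filter.1 ((s.filter (· < k)).max'_mem hL)
    have hle : ∀ x ∈ s, x ≤ j ↔ x < k := fun x hx =>
      ⟨fun hxj => hxj.trans_lt hjk, fun hxk => le_max' _ x (mem_filter.2 ⟨hx, hxk⟩)⟩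
    have hjT : j ∉ T := fun hj => absurd (T.min'_le j hj) (not_le.2 hjk)
    rcases hG (s.filter (· ≤ j)) (s.filter (j < ·)) fun a ha b hb =>
        (mem_filter.1 ha).2.trans_lt (mem_filter.1 hb).2 with hH | hV
    · exact absurd (mem_filter.2 ⟨hjs, hH⟩) hjT
    · have hleft : s.filter (· ≤ j) = s.filter (· < k) := filter_congr hle
      have hright : s.filter (j < ·) = s.filter (k ≤ ·) :=
        filter_congr fun x hx => by rw [← not_le, hle x hx, not_lt]
      rwa [hleft, hright] at hV
  · rw [not_nonempty_iff_eq_empty.1 hL]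
    intro a _ b hb
    simp at hb

lemma hasHomogeneousSplit_of_pivot {s : Finset V} (hs : 2 ≤ #s) {k : V} (hk : k ∈ s)
    (hH : G.IsUniformTo (s.filter (· ≤ k)) (s.filter (k < ·)))
    (hV : G.IsUniformTo (s.filter (k ≤ ·)) (s.filter (· < k))) : G.HasHomogeneousSplit s := by
  simp only [IsUniformTo, mem_filter, and_imp] at hH hV
  obtain ⟨x, hx, hxk⟩ := exists_mem_ne hs k
  by_cases hL : ∃ a ∈ s, a < k
  swap
  · push Not at hL
    refine hasHomogeneousSplit_of_uniform_vertex hs hk (G.Adj k x) fun y hy hyk => ?_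
    exact hH k hk le_rfl y hy ((hL y hy).lt_of_ne' hyk) x hx ((hL x hx).lt_of_ne' hxk)
  obtain ⟨a₀, ha₀, ha₀k⟩ := hL
  have hkL : ∀ a ∈ s, a < k → (G.Adj k a ↔ G.Adj k a₀) := fun a ha hak =>
    hV k hk le_rfl a ha hak a₀ ha₀ ha₀k
  by_cases hR : ∃ b ∈ s, k < b
  swap
  · push Not at hR
    exact hasHomogeneousSplit_of_uniform_vertex hs hk _ fun y hy hyk =>
      hkL y hy ((hR y hy).lt_of_ne hyk)
  obtain ⟨b₀, hb₀, hkb₀⟩ := hR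
  have hkR : ∀ b ∈ s, k < b → (G.Adj k b ↔ G.Adj k b₀) := fun b hb hkb =>
    hH k hk le_rfl b hb hkb b₀ hb₀ hkb₀
  have hLR : ∀ a ∈ s, a < k → ∀ b ∈ s, k < b → (G.Adj a b ↔ G.Adj a₀ b₀) :=
    fun a ha hak b hb hkb => (hH a ha hak.le b hb hkb b₀ hb₀ hkb₀).trans <| by
      rw [G.adj_comm a, G.adj_comm a₀]; exact hV b₀ hb₀ hkb₀.le a ha hak a₀ ha₀ ha₀k
  by_cases h₁ : G.Adj k a₀ ↔ G.Adj a₀ b₀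
  · refine hasHomogeneousSplit_of_filter (· < k) (G.Adj a₀ b₀) ⟨a₀, ha₀, ha₀k⟩
      ⟨k, hk, lt_irrefl k⟩ fun a ha b hb hak hbk => ?_
    rcases (not_lt.1 hbk).eq_or_lt with rfl | hkb
    · rw [G.adj_comm, hkL a ha hak, h₁]
    · exact hLR a ha hak b hb hkb
  by_cases h₂ : G.Adj k b₀ ↔ G.Adj a₀ b₀
  · refine hasHomogeneousSplit_of_filter (· ≤ k) (G.Adj a₀ b₀) ⟨k, hk, le_rfl⟩
      ⟨b₀, hb₀, not_le.2 hkb₀⟩ fun a ha b hb hak hbk => ?_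
    rcases hak.eq_or_lt with rfl | hak
    · rw [hkR b hb (not_le.1 hbk), h₂]
    · exact hLR a ha hak b hb (not_le.1 hbk)
  · refine hasHomogeneousSplit_of_uniform_vertex hs hk (G.Adj k a₀) fun y hy hyk => ?_
    rcases lt_or_gt_of_ne hyk with hyk | hky
    · exact hkL y hy hyk
    · rw [hkR y hy hky]
      tauto

theorem hasHomogeneousSplit_of_hasUniformCuts (hG : G.HasUniformCuts) {s : Finset V}
    (hs : 2 ≤ #s) : G.HasHomogeneousSplit s :=
  let ⟨_, hk, hH, hV⟩ := exists_pivot hG (card_pos.1 (by omega))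
  hasHomogeneousSplit_of_pivot hs hk hH hV

end Cuts

end SimpleGraph

namespace TwPaper

variable {n : ℕ} {H : SimpleGraph (Fin n)}

lemma graphMatrix_eq_iff {i j i' j' : Fin n} :
    graphMatrix H i j = graphMatrix H i' j' ↔ (H.Adj i j ↔ H.Adj i' j') := by
  rw [Bool.eq_iff_iff]
  simp [graphMatrix]

lemma isUniformTo_of_horizontal {R C : Set (Fin n)} (h : Horizontal (graphMatrix H) R C)
    {A B : Finset (Fin n)} (hA : ∀ a ∈ A, a ∈ R) (hB : ∀ b ∈ B, b ∈ C) : H.IsUniformTo A B :=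
  fun a ha b hb b' hb' => graphMatrix_eq_iff.1 (h a (hA a ha) b (hB b hb) b' (hB b' hb'))

lemma isUniformTo_of_vertical {R C : Set (Fin n)} (h : Vertical (graphMatrix H) R C)
    {A B : Finset (Fin n)} (hA : ∀ a ∈ A, a ∈ C) (hB : ∀ b ∈ B, b ∈ R) : H.IsUniformTo A B :=
  fun a ha b hb b' hb' => by
    rw [H.adj_comm a, H.adj_comm a]
    exact graphMatrix_eq_iff.1 (h a (hA a ha) b (hB b hb) b' (hB b' hb'))

def cutIndex (k i : Fin n) : Fin 2 := if i < k then 0 else 1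

lemma cutIndex_eq_zero {k i : Fin n} : cutIndex k i = 0 ↔ i < k := by
  unfold cutIndex; split_ifs <;> simp_all

lemma cutIndex_eq_one {k i : Fin n} : cutIndex k i = 1 ↔ k ≤ i := by
  unfold cutIndex; split_ifs <;> simp_all

lemma monotone_cutIndex (k : Fin n) : Monotone (cutIndex k) := by
  intro i j hij
  unfold cutIndex
  split_ifs <;> first | exact le_rfl | exact Fin.zero_le _ | exact absurd (hij.trans_lt ‹_›) ‹_›

lemma surjective_cutIndex {a k : Fin n} (hak : a < k) : Function.Surjective (cutIndex k) := by
  intro x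
  fin_cases x
  exacts [⟨a, cutIndex_eq_zero.2 hak⟩, ⟨k, cutIndex_eq_one.2 le_rfl⟩]

def cutDivision {a k : Fin n} (hak : a < k) : Division n n 2 where
  row := cutIndex k
  col := cutIndex k
  row_mono := monotone_cutIndex k
  col_mono := monotone_cutIndex k
  row_surj := surjective_cutIndex hak
  col_surj := surjective_cutIndex hak

theorem hasUniformCuts_of_almostMixedFree (h : AlmostMixedFree 2 (graphMatrix H)) :
    H.HasUniformCuts := by
  intro A B hAB
  by_contra! ⟨hAB', hBA⟩
  obtain ⟨a, ha⟩ : A.Nonempty :=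
    nonempty_iff_ne_empty.2 fun hA => hBA (by simp [hA, SimpleGraph.IsUniformTo])
  obtain ⟨b, hb⟩ : B.Nonempty :=
    nonempty_iff_ne_empty.2 fun hB => hAB' (by simp [hB, SimpleGraph.IsUniformTo])
  set k := B.min' ⟨b, hb⟩
  have hA : ∀ x ∈ A, cutIndex k x = 0 := fun x hx =>
    cutIndex_eq_zero.2 ((lt_min'_iff _ _).2 (hAB x hx))
  have hB : ∀ y ∈ B, cutIndex k y = 1 := fun y hy => cutIndex_eq_one.2 (min'_le _ _ hy)
  refine h ⟨cutDivision (cutIndex_eq_zero.1 (hA a ha)), fun i j hij => ?_⟩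
  fin_cases i <;> fin_cases j
  · exact absurd rfl hij
  · exact ⟨fun hH => hAB' (isUniformTo_of_horizontal hH hA hB),
      fun hV => hBA (isUniformTo_of_vertical hV hB hA)⟩
  · exact ⟨fun hH => hBA (isUniformTo_of_horizontal hH hB hA),
      fun hV => hAB' (isUniformTo_of_vertical hV hA hB)⟩
  · exact absurd rfl hij

/-- Every finite simple graph admitting, under some linear ordering
of its vertices, a `2`-almost mixed-free adjacency matrix satisfies `χ(G) ≤ ω(G)`. -/
theorem amfree_two_perfect {V : Type} [Fintype V] (G : SimpleGraph V)
    (h : AdmitsAMFree 2 G) :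
    G.chromaticNumber ≤ (G.cliqueNum : ℕ∞) := by
  obtain ⟨e, he⟩ := h
  have hcuts : (G.comap e).HasUniformCuts := hasUniformCuts_of_almostMixedFree he
  calc G.chromaticNumber ≤ (G.comap e).chromaticNumber :=
        SimpleGraph.chromaticNumber_mono_of_hom (SimpleGraph.Iso.comap e G).symm.toHom
    _ ≤ (G.comap e).cliqueNum :=
        SimpleGraph.chromaticNumber_le_cliqueNum_of_forall_hasHomogeneousSplit fun _ =>
          SimpleGraph.hasHomogeneousSplit_of_hasUniformCuts hcuts
    _ ≤ G.cliqueNum := by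
        exact_mod_cast SimpleGraph.cliqueNum_le_of_embedding (SimpleGraph.Iso.comap e G).toEmbedding

end TwPaper
end

section
/- Let t ∈ ℕ, ω ∈ ℕ, and B ∈ ℕ. Suppose that every finite simple graph H with clique number at most ω that admits, under some linear ordering of its vertices, a (4t+4)-almost mixed-free adjacency matrix satisfies χ(H) ≤ B. Then every finite simple graph G with twin-width at most t and clique number at most ω satisfies χ(G) ≤ B. -/
/-!
Order the vertices so that every part of every partition of the contraction sequence is an
interval. Given a `(4t+4)`-almost mixed minor `D` of the adjacency matrix, show along the sequence
that no part ever contains a whole row or column block of `D`; the final part `V` does. Suppose a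
merge creates a part `A` containing, say, the row block `i`. For every column block `j ≠ i` missed
by `A`, the zone `D[i,j]` is not vertical, which produces a part impure with `A` meeting column
block `j`; that part contains no full block, so it meets at most two column blocks, and at most
`2t` column blocks are missed. Being the union of two intervals without full blocks, `A` meets at
most three column blocks, so `d ≤ 2t + 4`; the case `t = 0`, `d = 4` is excluded by playing rows
against columns.
-/

namespace TwPaper


/-- The pair of vertex sets `A`, `B` is impure: neither complete nor anticomplete. -/
def ImpurePair {V : Type*} (G : SimpleGraph V) (A B : Finset V) : Prop :=
  ¬ ((∀ a ∈ A, ∀ b ∈ B, G.Adj a b) ∨ (∀ a ∈ A, ∀ b ∈ B, ¬ G.Adj a b))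

/-- `P` is a contraction sequence of a graph on vertex set `V`:
`P 0` is the partition into singletons, the last partition has a single part
(all of `V`), and each partition is obtained from the previous one by merging
two distinct parts. -/
def IsContractionSeq {V : Type*} [Fintype V] [DecidableEq V] {n : ℕ}
    (P : Fin n → Finpartition (Finset.univ : Finset V)) : Prop :=
  n = Fintype.card V ∧
  (∀ h : 0 < n, (P ⟨0, h⟩).parts = Finset.univ.image (fun v => ({v} : Finset V))) ∧
  (∀ h : 0 < n, (P ⟨n - 1, by omega⟩).parts = {(Finset.univ : Finset V)}) ∧
  (∀ i : ℕ, ∀ h : i + 1 < n,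
    ∃ A B : Finset V, A ∈ (P ⟨i, by omega⟩).parts ∧ B ∈ (P ⟨i, by omega⟩).parts ∧ A ≠ B ∧
      (P ⟨i + 1, h⟩).parts = insert (A ∪ B) ((((P ⟨i, by omega⟩).parts).erase A).erase B))

/-- The contraction sequence `P` has width at most `t`: for every `i` and every
part `A` of `P i`, at most `t` other parts of `P i` form an impure pair with `A`. -/
def SeqWidthLE {V : Type*} [Fintype V] [DecidableEq V] (G : SimpleGraph V) {n : ℕ}
    (P : Fin n → Finpartition (Finset.univ : Finset V)) (t : ℕ) : Prop :=
  ∀ i : Fin n, ∀ A ∈ (P i).parts,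
    ({B : Finset V | B ∈ (P i).parts ∧ B ≠ A ∧ ImpurePair G A B}).ncard ≤ t

/-- The twin-width of `G` is at most `t`: some contraction sequence of `G`
has width at most `t`. -/
def TwinWidthLE {V : Type*} [Fintype V] [DecidableEq V] (G : SimpleGraph V) (t : ℕ) : Prop :=
  ∃ P : Fin (Fintype.card V) → Finpartition (Finset.univ : Finset V),
    IsContractionSeq P ∧ SeqWidthLE G P t



section Blocks

variable {α β : Type*} [LinearOrder α] [LinearOrder β] {f : α → β} {S S₁ S₂ : Set α}

theorem _root_.Monotone.fiber_subset_of_lt_of_lt (hf : Monotone f) (hS : S.OrdConnected) {i j k : β}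
    (hij : i < j) (hjk : j < k) (hi : i ∈ f '' S) (hk : k ∈ f '' S) : f ⁻¹' {j} ⊆ S := by
  obtain ⟨a, ha, rfl⟩ := hi
  obtain ⟨c, hc, rfl⟩ := hk
  rintro b rfl
  exact hS.out ha hc ⟨(hf.reflect_lt hij).le, (hf.reflect_lt hjk).le⟩

theorem _root_.Monotone.ncard_image_le [Finite β] (hf : Monotone f) (hS : S.OrdConnected) :
    (f '' S).ncard ≤ {j | f ⁻¹' {j} ⊆ S}.ncard + 2 := by
  rcases (f '' S).eq_empty_or_nonempty with h | hne
  · simp [h]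
  obtain ⟨p, hp, hpmin⟩ := (f '' S).exists_min_image id (Set.toFinite _) hne
  obtain ⟨q, hq, hqmax⟩ := (f '' S).exists_max_image id (Set.toFinite _) hne
  have hinner : f '' S \ {p, q} ⊆ {j | f ⁻¹' {j} ⊆ S} := by
    rintro j ⟨hj, hjpq⟩
    simp only [Set.mem_insert_iff, Set.mem_singleton_iff, not_or] at hjpq
    exact hf.fiber_subset_of_lt_of_lt hS ((hpmin j hj).lt_of_ne' hjpq.1)
      ((hqmax j hj).lt_of_ne hjpq.2) hp hq
  calc (f '' S).ncard ≤ (f '' S \ {p, q}).ncard + ({p, q} : Set β).ncard :=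
        Set.ncard_le_ncard_sdiff_add_ncard _ _
    _ ≤ {j | f ⁻¹' {j} ⊆ S}.ncard + 2 :=
        add_le_add (Set.ncard_le_ncard hinner) ((Set.ncard_insert_le _ _).trans (by simp))

/-- A full fiber of `S₁ ∪ S₂` must meet both intervals, and two fibers cannot both do so. -/
theorem _root_.Monotone.subsingleton_fiber_subset_union (hf : Monotone f) (h₁ : S₁.OrdConnected)
    (h₂ : S₂.OrdConnected) (hdisj : Disjoint S₁ S₂) (hn₁ : ∀ j, ¬ f ⁻¹' {j} ⊆ S₁)
    (hn₂ : ∀ j, ¬ f ⁻¹' {j} ⊆ S₂) : {j | f ⁻¹' {j} ⊆ S₁ ∪ S₂}.Subsingleton := by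
  have meets (j : β) (hj : f ⁻¹' {j} ⊆ S₁ ∪ S₂) :
      (∃ a ∈ S₁, f a = j) ∧ ∃ a ∈ S₂, f a = j := by
    constructor <;> by_contra! h
    · exact hn₂ j fun a ha => (hj ha).resolve_left fun ha₁ => h a ha₁ ha
    · exact hn₁ j fun a ha => (hj ha).resolve_right fun ha₂ => h a ha₂ ha
  intro i hi j hj
  by_contra hne
  wlog hlt : i < j generalizing i j
  · exact this hj hi (Ne.symm hne) ((not_lt.1 hlt).lt_of_ne (Ne.symm hne))
  obtain ⟨⟨a₁, ha₁, rfl⟩, ⟨a₂, ha₂, hfa₂⟩⟩ := meets i hi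
  obtain ⟨⟨b₁, hb₁, rfl⟩, ⟨b₂, hb₂, hfb₂⟩⟩ := meets j hj
  rcases le_total a₁ a₂ with h | h
  · have : a₂ < b₁ := hf.reflect_lt (hfa₂ ▸ hlt)
    exact Set.disjoint_left.1 hdisj (h₁.out ha₁ hb₁ ⟨h, this.le⟩) ha₂
  · have : a₁ < b₂ := hf.reflect_lt (hfb₂ ▸ hlt)
    exact Set.disjoint_left.1 hdisj ha₁ (h₂.out ha₂ hb₂ ⟨h, this.le⟩)

end Blocks

section Divisions

open scoped Matrix

variable {m n d : ℕ}

def Division.transpose (D : Division m n d) : Division n m d :=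
  ⟨D.col, D.row, D.col_mono, D.row_mono, D.col_surj, D.row_surj⟩

theorem mixed_transpose_iff {M : BMatrix m n} {R : Set (Fin m)} {C : Set (Fin n)} :
    Mixed Mᵀ C R ↔ Mixed M R C :=
  And.comm

theorem IsAlmostMixedMinor.transpose {M : BMatrix m n} {D : Division m n d}
    (hD : IsAlmostMixedMinor M D) : IsAlmostMixedMinor Mᵀ D.transpose :=
  fun i j hij => mixed_transpose_iff.2 (hD j i hij.symm)

theorem IsAlmostMixedMinor.nontrivial_rowBlock {M : BMatrix m n} {D : Division m n d}
    (hD : IsAlmostMixedMinor M D) (hd : 2 ≤ d) (i : Fin d) : (D.rowBlock i).Nontrivial := by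
  have := Fin.nontrivial_iff_two_le.2 hd
  obtain ⟨j, hji⟩ := exists_ne i
  have hnv := (hD i j hji.symm).2
  simp only [Vertical, not_forall] at hnv
  obtain ⟨_, _, r, hr, r', hr', hne⟩ := hnv
  exact ⟨r, hr, r', hr', fun h => hne (h ▸ rfl)⟩

end Divisions

def HasFullBlock {n d : ℕ} (D : Division n n d) (S : Set (Fin n)) : Prop :=
  (∃ i, D.rowBlock i ⊆ S) ∨ ∃ j, D.colBlock j ⊆ S

section FullBlocks

variable {n d t : ℕ} {D : Division n n d} {S : Set (Fin n)}

/-- The full row block `i` forces the three other column blocks to be met, so the middle one,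
which is neither the first nor the last, is full; that forces the first and last row blocks to be
met, making both inner row blocks full. -/
theorem false_of_rowBlock_subset_of_four (hd : d = 4) (hS : S.OrdConnected)
    (hrows : {i | D.rowBlock i ⊆ S}.Subsingleton)
    (hrow : ∀ i, D.rowBlock i ⊆ S → ∀ j ≠ i, j ∈ D.col '' S)
    (hcol : ∀ j, D.colBlock j ⊆ S → ∀ i ≠ j, i ∈ D.row '' S)
    {i : Fin d} (hi : D.rowBlock i ⊆ S) : False := by
  subst hd
  obtain ⟨x, m, z, hxm, hmz, hx, hm, hz, hm0, hm3⟩ : ∃ x m z : Fin 4, x < m ∧ m < z ∧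
      x ≠ i ∧ m ≠ i ∧ z ≠ i ∧ (0 : Fin 4) ≠ m ∧ (3 : Fin 4) ≠ m := by
    fin_cases i <;> decide
  have hmfull : D.colBlock m ⊆ S :=
    D.col_mono.fiber_subset_of_lt_of_lt hS hxm hmz (hrow i hi x hx) (hrow i hi z hz)
  have hmet (k : Fin 4) (hk : k ≠ m) := hcol m hmfull k hk
  have h1 := D.row_mono.fiber_subset_of_lt_of_lt hS (by decide : (0 : Fin 4) < 1)
    (by decide : (1 : Fin 4) < 3) (hmet 0 hm0) (hmet 3 hm3)
  have h2 := D.row_mono.fiber_subset_of_lt_of_lt hS (by decide : (0 : Fin 4) < 2)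
    (by decide : (2 : Fin 4) < 3) (hmet 0 hm0) (hmet 3 hm3)
  exact absurd (hrows h1 h2) (by decide)

theorem false_of_rowBlock_subset (hd : 4 * t + 4 ≤ d) (hS : S.OrdConnected)
    (hrows : {i | D.rowBlock i ⊆ S}.Subsingleton) (hcols : {j | D.colBlock j ⊆ S}.Subsingleton)
    (hrow : ∀ i, D.rowBlock i ⊆ S → {j | j ≠ i ∧ j ∉ D.col '' S}.ncard ≤ 2 * t)
    (hcol : ∀ j, D.colBlock j ⊆ S → {i | i ≠ j ∧ i ∉ D.row '' S}.ncard ≤ 2 * t)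
    {i : Fin d} (hi : D.rowBlock i ⊆ S) : False := by
  have hmet : (D.col '' S).ncard ≤ 3 := by
    have := Set.ncard_le_one_iff_subsingleton.2 hcols
    have : (D.col '' S).ncard ≤ {j | D.colBlock j ⊆ S}.ncard + 2 := D.col_mono.ncard_image_le hS
    omega
  have hcover : (Set.univ : Set (Fin d)) ⊆ {i} ∪ D.col '' S ∪ {j | j ≠ i ∧ j ∉ D.col '' S} := by
    intro j _
    by_cases hji : j = i
    · exact .inl (.inl hji)
    by_cases hj : j ∈ D.col '' S
    · exact .inl (.inr hj)
    · exact .inr ⟨hji, hj⟩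
  have hd' : d ≤ 2 * t + 4 :=
    calc d = (Set.univ : Set (Fin d)).ncard := by simp
      _ ≤ ({i} ∪ D.col '' S ∪ {j | j ≠ i ∧ j ∉ D.col '' S}).ncard := Set.ncard_le_ncard hcover
      _ ≤ ({i} : Set (Fin d)).ncard + (D.col '' S).ncard + {j | j ≠ i ∧ j ∉ D.col '' S}.ncard :=
        (Set.ncard_union_le _ _).trans (add_le_add (Set.ncard_union_le _ _) le_rfl)
      _ ≤ 2 * t + 4 := by have := hrow i hi; simp only [Set.ncard_singleton]; omega
  have ht : t = 0 := by omega
  subst ht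
  refine false_of_rowBlock_subset_of_four (by omega) hS hrows (fun i hi j hj => ?_)
    (fun j hj i hi => ?_) hi
  · by_contra hj'
    exact ((Set.ncard_eq_zero (Set.toFinite _)).1 (Nat.le_zero.1 (hrow i hi))).subset ⟨hj, hj'⟩
  · by_contra hi'
    exact ((Set.ncard_eq_zero (Set.toFinite _)).1 (Nat.le_zero.1 (hcol j hj))).subset ⟨hi, hi'⟩

theorem not_hasFullBlock (hd : 4 * t + 4 ≤ d) (hS : S.OrdConnected)
    (hrows : {i | D.rowBlock i ⊆ S}.Subsingleton) (hcols : {j | D.colBlock j ⊆ S}.Subsingleton)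
    (hrow : ∀ i, D.rowBlock i ⊆ S → {j | j ≠ i ∧ j ∉ D.col '' S}.ncard ≤ 2 * t)
    (hcol : ∀ j, D.colBlock j ⊆ S → {i | i ≠ j ∧ i ∉ D.row '' S}.ncard ≤ 2 * t) :
    ¬ HasFullBlock D S := by
  rintro (⟨i, hi⟩ | ⟨j, hj⟩)
  · exact false_of_rowBlock_subset hd hS hrows hcols hrow hcol hi
  · exact false_of_rowBlock_subset (D := D.transpose) hd hS hcols hrows hcol hrow hj

end FullBlocks

section Graphs

open Finset
open scoped Matrix

variable {V : Type*} [Fintype V] {G : SimpleGraph V} {e : Fin (Fintype.card V) ≃ V}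

theorem adjMatrix_transpose (G : SimpleGraph V) (e : Fin (Fintype.card V) ≃ V) :
    (adjMatrix G e)ᵀ = adjMatrix G e := by
  ext i j
  simp [adjMatrix, G.adj_comm]

theorem impurePair_of_adjMatrix_ne {A B : Finset V} {r r' c : Fin (Fintype.card V)}
    (hr : e r ∈ A) (hr' : e r' ∈ A) (hc : e c ∈ B) (hne : adjMatrix G e r c ≠ adjMatrix G e r' c) :
    ImpurePair G A B := by
  rintro (h | h) <;> apply hne <;> simp [adjMatrix, h _ hr _ hc, h _ hr' _ hc]

theorem not_hasFullBlock_singleton {d : ℕ}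
    {D : Division (Fintype.card V) (Fintype.card V) d} (hD : IsAlmostMixedMinor (adjMatrix G e) D)
    (hd : 2 ≤ d) (v : V) : ¬ HasFullBlock D (e ⁻¹' ↑({v} : Finset V)) := by
  have hsub : (e ⁻¹' ↑({v} : Finset V)).Subsingleton := by
    rw [coe_singleton]
    exact Set.subsingleton_singleton.preimage e.injective
  have hDt : IsAlmostMixedMinor (adjMatrix G e) D.transpose :=
    adjMatrix_transpose G e ▸ hD.transpose
  rintro (⟨i, hi⟩ | ⟨j, hj⟩)
  · exact (hD.nontrivial_rowBlock hd i).not_subsingleton (hsub.anti hi)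
  · exact (hDt.nontrivial_rowBlock hd j).not_subsingleton (hsub.anti hj)

variable [DecidableEq V] {t d : ℕ} {D : Division (Fintype.card V) (Fintype.card V) d}

theorem ncard_colBlock_not_met_le (hD : IsAlmostMixedMinor (adjMatrix G e) D)
    {Q : Finpartition (univ : Finset V)} (hQ : ∀ B ∈ Q.parts, (e ⁻¹' ↑B).OrdConnected)
    {A : Finset V} (hwidth : {B | B ∈ Q.parts ∧ B ≠ A ∧ ImpurePair G A B}.ncard ≤ t)
    (hother : ∀ B ∈ Q.parts, B ≠ A → ∀ j, ¬ D.colBlock j ⊆ e ⁻¹' ↑B)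
    {i : Fin d} (hi : D.rowBlock i ⊆ e ⁻¹' ↑A) :
    {j | j ≠ i ∧ j ∉ D.col '' (e ⁻¹' ↑A)}.ncard ≤ 2 * t := by
  classical
  set I := Q.parts.filter fun B => B ≠ A ∧ ImpurePair G A B
  have hI : #I ≤ t := by
    have : (I : Set (Finset V)) = {B | B ∈ Q.parts ∧ B ≠ A ∧ ImpurePair G A B} := by
      ext; simp [I]
    rwa [← this, Set.ncard_coe_finset] at hwidth
  have hcover : {j | j ≠ i ∧ j ∉ D.col '' (e ⁻¹' ↑A)} ⊆ ⋃ B ∈ I, D.col '' (e ⁻¹' ↑B) := by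
    rintro j ⟨hji, hjA⟩
    have hnv := (hD i j hji.symm).2
    simp only [Vertical, not_forall] at hnv
    obtain ⟨c, hc, r, hr, r', hr', hne⟩ := hnv
    have hcB : e c ∈ Q.part (e c) := Q.mem_part (mem_univ _)
    have hBA : Q.part (e c) ≠ A := fun h => hjA ⟨c, h ▸ hcB, hc⟩
    exact Set.mem_biUnion (mem_filter.2 ⟨Q.part_mem.2 (mem_univ _), hBA,
      impurePair_of_adjMatrix_ne (hi hr) (hi hr') hcB hne⟩) ⟨c, hcB, hc⟩
  have hmet : ∀ B ∈ I, (D.col '' (e ⁻¹' ↑B)).ncard ≤ 2 := by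
    intro B hB
    obtain ⟨hBQ, hBA, -⟩ := mem_filter.1 hB
    have hnone : {j | D.col ⁻¹' {j} ⊆ e ⁻¹' ↑B} = ∅ :=
      Set.eq_empty_of_forall_notMem (hother B hBQ hBA)
    simpa [hnone] using D.col_mono.ncard_image_le (hQ B hBQ)
  calc {j | j ≠ i ∧ j ∉ D.col '' (e ⁻¹' ↑A)}.ncard
      ≤ (⋃ B ∈ I, D.col '' (e ⁻¹' ↑B)).ncard := Set.ncard_le_ncard hcover
    _ ≤ ∑ B ∈ I, (D.col '' (e ⁻¹' ↑B)).ncard := I.set_ncard_biUnion_le _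
    _ ≤ #I • 2 := sum_le_card_nsmul _ _ _ hmet
    _ ≤ 2 * t := by rw [smul_eq_mul]; omega

theorem not_hasFullBlock_union (hd : 4 * t + 4 ≤ d) (hD : IsAlmostMixedMinor (adjMatrix G e) D)
    {Q : Finpartition (univ : Finset V)} (hQ : ∀ B ∈ Q.parts, (e ⁻¹' ↑B).OrdConnected)
    {A₁ A₂ : Finset V} (hA : A₁ ∪ A₂ ∈ Q.parts)
    (hwidth : {B | B ∈ Q.parts ∧ B ≠ A₁ ∪ A₂ ∧ ImpurePair G (A₁ ∪ A₂) B}.ncard ≤ t)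
    (h₁ : (e ⁻¹' ↑A₁).OrdConnected) (h₂ : (e ⁻¹' ↑A₂).OrdConnected) (hdisj : Disjoint A₁ A₂)
    (hn₁ : ¬ HasFullBlock D (e ⁻¹' ↑A₁)) (hn₂ : ¬ HasFullBlock D (e ⁻¹' ↑A₂))
    (hother : ∀ B ∈ Q.parts, B ≠ A₁ ∪ A₂ → ¬ HasFullBlock D (e ⁻¹' ↑B)) :
    ¬ HasFullBlock D (e ⁻¹' ↑(A₁ ∪ A₂)) := by
  have hsplit : e ⁻¹' ↑(A₁ ∪ A₂) = e ⁻¹' ↑A₁ ∪ e ⁻¹' ↑A₂ := by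
    rw [coe_union, Set.preimage_union]
  have hdisj' : Disjoint (e ⁻¹' ↑A₁) (e ⁻¹' ↑A₂) := (disjoint_coe.2 hdisj).preimage e
  have hDt : IsAlmostMixedMinor (adjMatrix G e) D.transpose :=
    adjMatrix_transpose G e ▸ hD.transpose
  refine not_hasFullBlock hd (hQ _ hA) ?_ ?_
    (fun i hi => ncard_colBlock_not_met_le hD hQ hwidth
      (fun B hB hne j hj => hother B hB hne (.inr ⟨j, hj⟩)) hi)
    (fun j hj => ncard_colBlock_not_met_le hDt hQ hwidth
      (fun B hB hne i hi => hother B hB hne (.inl ⟨i, hi⟩)) hj)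
  · rw [hsplit]
    exact D.row_mono.subsingleton_fiber_subset_union h₁ h₂ hdisj'
      (fun i hi => hn₁ (.inl ⟨i, hi⟩)) (fun i hi => hn₂ (.inl ⟨i, hi⟩))
  · rw [hsplit]
    exact D.col_mono.subsingleton_fiber_subset_union h₁ h₂ hdisj'
      (fun j hj => hn₁ (.inr ⟨j, hj⟩)) (fun j hj => hn₂ (.inr ⟨j, hj⟩))

end Graphs

section IntervalOrder

theorem _root_.Pi.apply_eq_of_toColex_le_of_le {ι : Type*} {β : ι → Type*} [LinearOrder ι]
    [WellFoundedGT ι] [∀ i, LinearOrder (β i)] {x y z : ∀ i, β i}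
    (hxy : toColex x ≤ toColex y) (hyz : toColex y ≤ toColex z) {i : ι}
    (hxz : ∀ j ≥ i, x j = z j) : ∀ j ≥ i, y j = x j := by
  intro j
  induction j using WellFoundedGT.induction with
  | _ j ih =>
    intro hj
    have hxy' : ∀ k > j, x k = y k := fun k hk => (ih k hk (hj.trans hk.le)).symm
    have hyz' : ∀ k > j, y k = z k := fun k hk => by
      rw [← hxy' k hk, hxz k (hj.trans hk.le)]
    exact le_antisymm ((Pi.apply_le_of_toColex hyz hyz').trans_eq (hxz j hj).symm)
      (Pi.apply_le_of_toColex hxy hxy')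

theorem exists_equiv_fin_monotone_comp {α L : Type*} [Fintype α] [LinearOrder L] {f : α → L}
    (hf : Function.Injective f) : ∃ e : Fin (Fintype.card α) ≃ α, Monotone (f ∘ e) := by
  let := LinearOrder.lift' f hf
  exact ⟨(monoEquivOfFin α rfl).toEquiv, (monoEquivOfFin α rfl).monotone⟩

theorem _root_.Finpartition.part_subset_part_of_le {α : Type*} [DecidableEq α] {s : Finset α}
    {P Q : Finpartition s} (hPQ : P ≤ Q) {a : α} (ha : a ∈ s) : P.part a ⊆ Q.part a := by
  obtain ⟨c, hc, hle⟩ := hPQ (P.part_mem.2 ha)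
  rwa [Q.part_eq_of_mem hc (hle (P.mem_part ha))]

variable {V : Type*} [Fintype V] [DecidableEq V]

/-- Vertices are ordered colexicographically by the sequence of their parts (in an arbitrary
enumeration of `Finset V`), so that the latest partitions are compared first. -/
theorem exists_equiv_ordConnected_of_monotone {n : ℕ}
    {P : Fin n → Finpartition (Finset.univ : Finset V)} (hP : Monotone P)
    (hsep : ∀ u v, (∀ k, (P k).part u = (P k).part v) → u = v) :
    ∃ e : Fin (Fintype.card V) ≃ V, ∀ k, ∀ Q ∈ (P k).parts, (e ⁻¹' ↑Q).OrdConnected := by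
  set key := Fintype.equivFin (Finset V)
  set sig : V → Colex (Fin n → Fin (Fintype.card (Finset V))) :=
    fun v => toColex fun k => key ((P k).part v)
  have hsig : Function.Injective sig := fun u v h =>
    hsep u v fun k => key.injective (congrFun (toColex.injective h) k)
  obtain ⟨e, he⟩ := exists_equiv_fin_monotone_comp hsig
  refine ⟨e, fun k Q hQ => ⟨fun a ha c hc b hb => ?_⟩⟩
  have hpart (l : Fin n) (hl : l ≥ k) (v : V) (hv : v ∈ Q) : (P l).part v = (P l).part (e a) := by
    have hsub : Q ⊆ (P l).part v := (P k).part_eq_of_mem hQ hv ▸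
      Finpartition.part_subset_part_of_le (hP hl) (Finset.mem_univ v)
    exact ((P l).part_eq_of_mem ((P l).part_mem.2 (Finset.mem_univ _)) (hsub ha)).symm
  have hsame := Pi.apply_eq_of_toColex_le_of_le (he hb.1) (he hb.2)
    (fun l hl => congrArg key (hpart l hl _ hc).symm) k le_rfl
  have hbQ : (P k).part (e b) = Q :=
    (key.injective hsame).trans ((P k).part_eq_of_mem hQ ha)
  exact hbQ ▸ (P k).mem_part (Finset.mem_univ (e b))

end IntervalOrder

section ContractionSeq

open Finset

variable {V : Type*} [Fintype V] [DecidableEq V] {n : ℕ}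
  {P : Fin n → Finpartition (univ : Finset V)}

theorem IsContractionSeq.le_succ (hP : IsContractionSeq P) (k : ℕ) (hk : k + 1 < n) :
    P ⟨k, by omega⟩ ≤ P ⟨k + 1, hk⟩ := by
  obtain ⟨A, B, -, -, -, hparts⟩ := hP.2.2.2 k hk
  intro C hC
  by_cases hCAB : C = A ∨ C = B
  · refine ⟨A ∪ B, hparts ▸ mem_insert_self _ _, ?_⟩
    rcases hCAB with rfl | rfl
    exacts [subset_union_left, subset_union_right]
  · obtain ⟨hCA, hCB⟩ := not_or.1 hCAB
    exact ⟨C, hparts ▸ mem_insert_of_mem (mem_erase.2 ⟨hCB, mem_erase.2 ⟨hCA, hC⟩⟩), le_rfl⟩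

theorem IsContractionSeq.monotone (hP : IsContractionSeq P) : Monotone P := by
  rcases n with _ | n
  · exact fun a => a.elim0
  exact Fin.monotone_iff_le_succ.2 fun k => hP.le_succ k k.succ.isLt

theorem IsContractionSeq.part_zero (hP : IsContractionSeq P) (hn : 0 < n) (v : V) :
    (P ⟨0, hn⟩).part v = {v} :=
  (P _).part_eq_of_mem (hP.2.1 hn ▸ mem_image_of_mem _ (mem_univ v)) (mem_singleton_self v)

theorem IsContractionSeq.exists_equiv_ordConnected (hP : IsContractionSeq P) :
    ∃ e : Fin (Fintype.card V) ≃ V, ∀ k, ∀ Q ∈ (P k).parts, (e ⁻¹' ↑Q).OrdConnected := by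
  refine exists_equiv_ordConnected_of_monotone hP.monotone fun u v h => ?_
  rcases Nat.eq_zero_or_pos n with hn | hn
  · have : IsEmpty V := Fintype.card_eq_zero_iff.1 (hP.1 ▸ hn)
    exact isEmptyElim u
  · simpa [hP.part_zero hn] using h ⟨0, hn⟩

theorem IsContractionSeq.not_hasFullBlock {t d : ℕ} (hd : 4 * t + 4 ≤ d) {G : SimpleGraph V}
    (hP : IsContractionSeq P) (hW : SeqWidthLE G P t) {e : Fin (Fintype.card V) ≃ V}
    (he : ∀ k, ∀ Q ∈ (P k).parts, (e ⁻¹' ↑Q).OrdConnected)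
    {D : Division (Fintype.card V) (Fintype.card V) d} (hD : IsAlmostMixedMinor (adjMatrix G e) D)
    (k : ℕ) (hk : k < n) : ∀ B ∈ (P ⟨k, hk⟩).parts, ¬ HasFullBlock D (e ⁻¹' ↑B) := by
  induction k with
  | zero =>
    intro B hB
    obtain ⟨v, -, rfl⟩ := mem_image.1 (hP.2.1 hk ▸ hB)
    exact not_hasFullBlock_singleton hD (by omega) v
  | succ k ih =>
    obtain ⟨A₁, A₂, h₁, h₂, hne, hparts⟩ := hP.2.2.2 k hk
    have hold (B) (hB : B ∈ (P ⟨k + 1, hk⟩).parts) (hBne : B ≠ A₁ ∪ A₂) :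
        B ∈ (P ⟨k, by omega⟩).parts :=
      mem_of_mem_erase (mem_of_mem_erase ((mem_insert.1 (hparts ▸ hB)).resolve_left hBne))
    have hA : A₁ ∪ A₂ ∈ (P ⟨k + 1, hk⟩).parts := hparts ▸ mem_insert_self _ _
    intro B hB
    by_cases hBA : B = A₁ ∪ A₂
    · subst hBA
      exact not_hasFullBlock_union hd hD (he _) hA (hW _ _ hA) (he _ _ h₁) (he _ _ h₂)
        ((P _).disjoint h₁ h₂ hne) (ih _ _ h₁) (ih _ _ h₂)
        fun B hB hBne => ih _ _ (hold B hB hBne)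
    · exact ih _ _ (hold B hB hBA)

theorem IsContractionSeq.almostMixedFree_adjMatrix {t d : ℕ} (hd : 4 * t + 4 ≤ d)
    {G : SimpleGraph V} (hP : IsContractionSeq P) (hW : SeqWidthLE G P t)
    {e : Fin (Fintype.card V) ≃ V} (he : ∀ k, ∀ Q ∈ (P k).parts, (e ⁻¹' ↑Q).OrdConnected) :
    AlmostMixedFree d (adjMatrix G e) := by
  rintro ⟨D, hD⟩
  have hn : 0 < n := hP.1 ▸ (D.row_surj ⟨0, by omega⟩).choose.pos
  have hlast : univ ∈ (P ⟨n - 1, by omega⟩).parts := hP.2.2.1 hn ▸ mem_singleton_self _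
  exact hP.not_hasFullBlock hd hW he hD _ _ univ hlast (.inl ⟨⟨0, by omega⟩, by simp⟩)

end ContractionSeq

/-- Let `t ω B : ℕ`. If every finite simple graph `H` with clique
number at most `ω` that admits, under some linear ordering of its vertices, a
`(4t+4)`-almost mixed-free adjacency matrix satisfies `χ(H) ≤ B`, then every finite
simple graph `G` with twin-width at most `t` and clique number at most `ω` satisfies
`χ(G) ≤ B`. -/
theorem tww_to_amfree (t ω B : ℕ)
    (h : ∀ (V : Type) [Fintype V] (H : SimpleGraph V),
      H.cliqueNum ≤ ω → AdmitsAMFree (4 * t + 4) H → H.chromaticNumber ≤ (B : ℕ∞)) :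
    ∀ (V : Type) [Fintype V] [DecidableEq V] (G : SimpleGraph V),
      TwinWidthLE G t → G.cliqueNum ≤ ω → G.chromaticNumber ≤ (B : ℕ∞) := by
  intro V _ _ G ⟨P, hP, hW⟩ hω
  obtain ⟨e, he⟩ := hP.exists_equiv_ordConnected
  exact h V G hω ⟨e, hP.almostMixedFree_adjMatrix le_rfl hW he⟩

end TwPaper
end
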